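/- arXiv:1506.06515 — 2 statements merged into one kernel-verified Lean document; each statement's English description precedes it below -/
import Mathlib

section
/- Let G = (V,E) be a graph. Then for every circuit graph c ∈ 𝒞(G), the point c̃ = (1/Per(c))·Σ_{e∈E(c)} e is an extreme point of the convex set 𝒫(G). -/
open Filter Topology MeasureTheory

/-- A (directed) graph on a vertex set `V`: an edge relation `E ⊆ V × V`
whose two coordinate projections are surjective. -/
structure DirGraph (V : Type) : Type where
  E : Set (V × V)
  surj_init : ∀ v : V, ∃ u : V, (v, u) ∈ E
  surj_term : ∀ v : V, ∃ u : V, (u, v) ∈ E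

/-- A walk of length `l` in `G`. -/
def IsWalk {V : Type} (G : DirGraph V) (l : ℕ) (w : Fin (l + 1) → V) : Prop :=
  ∀ i : Fin l, (w i.castSucc, w i.succ) ∈ G.E

/-- The edge set of a walk. -/
def walkEdges {V : Type} {l : ℕ} (w : Fin (l + 1) → V) : Set (V × V) :=
  {e | ∃ i : Fin l, e = (w i.castSucc, w i.succ)}

/-- `c` is the edge set of a circuit of `G`: a closed walk whose vertices are
pairwise distinct except that the initial and terminal vertices coincide. -/
def IsCircuitIn {V : Type} (G : DirGraph V) (c : Set (V × V)) : Prop :=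
  ∃ l : ℕ, 0 < l ∧ ∃ w : Fin (l + 1) → V,
    IsWalk G l w ∧ w (Fin.last l) = w 0 ∧
    (∀ i j : Fin (l + 1), i < j → w i = w j → i = 0 ∧ j = Fin.last l) ∧
    c = walkEdges w

/-- The set `𝒞(G)` of circuit graphs of `G` (a circuit graph is identified
with its edge set). -/
def circuitsOf {V : Type} (G : DirGraph V) : Set (Set (V × V)) :=
  {c | IsCircuitIn G c}

/-- The vertex set of a circuit graph (given by its edge set). -/
def circVerts {V : Type} (c : Set (V × V)) : Set V :=
  {v | ∃ e ∈ c, v = e.1 ∨ v = e.2}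

/-- The element `Σ_{e ∈ E(c)} e` of the vector space with basis the edges,
associated with a circuit graph `c`. -/
noncomputable def circVec {V : Type} (c : Set (V × V)) : V × V → ℝ :=
  c.indicator fun _ => 1

/-- `c̃ = (1/Per(c))·c` where `Per(c)` is the number of edges of `c`. -/
noncomputable def circTilde {V : Type} (c : Set (V × V)) : V × V → ℝ :=
  fun e => ((Set.ncard c : ℝ))⁻¹ * circVec c e

/-- Membership in `ℳ(G)`: nonnegative coefficients supported on the edges. -/
def MemM {V : Type} [Fintype V] (G : DirGraph V) (a : V × V → ℝ) : Prop :=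
  (∀ e, 0 ≤ a e) ∧ ∀ e, e ∉ G.E → a e = 0

/-- Membership in `ℐ(G)`: at every vertex the incoming coefficient sum equals
the outgoing coefficient sum. -/
def MemI {V : Type} [Fintype V] (G : DirGraph V) (a : V × V → ℝ) : Prop :=
  MemM G a ∧ ∀ v : V, (∑ u : V, a (u, v)) = ∑ u : V, a (v, u)

/-- Membership in `𝒫(G)`: elements of `ℐ(G)` of total mass `1`. -/
def MemP {V : Type} [Fintype V] (G : DirGraph V) (a : V × V → ℝ) : Prop :=
  MemI G a ∧ (∑ e : V × V, a e) = 1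

/-- The action of a map on edges. -/
def edgeMap {V₁ V₂ : Type} (ψ : V₁ → V₂) (e : V₁ × V₁) : V₂ × V₂ := (ψ e.1, ψ e.2)

/-- `ψ : G₁ → G₂` is a cover: an edge-surjective, positive-directional
graph homomorphism. -/
structure IsCover {V₁ V₂ : Type} (G₁ : DirGraph V₁) (G₂ : DirGraph V₂) (ψ : V₁ → V₂) : Prop where
  hom : ∀ u v : V₁, (u, v) ∈ G₁.E → (ψ u, ψ v) ∈ G₂.E
  edgeSurj : ∀ e ∈ G₂.E, ∃ u v : V₁, (u, v) ∈ G₁.E ∧ (ψ u, ψ v) = e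
  posDir : ∀ u v v' : V₁, (u, v) ∈ G₁.E → (u, v') ∈ G₁.E → ψ v = ψ v'

/-- The induced linear map `ψ_*` on edge vectors: the coefficient of an edge `e`
of the target is the sum of the coefficients of its preimages. -/
noncomputable def pushVec {V₁ V₂ : Type} (ψ : V₁ → V₂) (a : V₁ × V₁ → ℝ) : V₂ × V₂ → ℝ :=
  fun e => ∑ᶠ e' ∈ {e' : V₁ × V₁ | edgeMap ψ e' = e}, a e'

/-- Euclidean distance on finite-dimensional coordinate spaces. -/
noncomputable def dE {ι : Type} [Fintype ι] (a b : ι → ℝ) : ℝ :=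
  Real.sqrt (∑ i : ι, (a i - b i) ^ 2)

/-- A sequence of covers `G₀ ← G₁ ← G₂ ← ⋯` of finite graphs, with `G₀`
the one-vertex graph (with a single loop). -/
structure CoverSystem : Type 1 where
  V : ℕ → Type
  fintypeV : ∀ n, Fintype (V n)
  G : ∀ n, DirGraph (V n)
  φ : ∀ n, V (n + 1) → V n
  cover : ∀ n, IsCover (G (n + 1)) (G n) (φ n)
  V0_single : ∀ x y : V 0, x = y

namespace CoverSystem

instance (S : CoverSystem) (n : ℕ) : Fintype (S.V n) := S.fintypeV n
instance (S : CoverSystem) (n : ℕ) : TopologicalSpace (S.V n) := ⊥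
instance (S : CoverSystem) (n : ℕ) : DiscreteTopology (S.V n) := ⟨rfl⟩

/-- `φ_{n+k, n}` as a composition of the covering maps. -/
def phiIter (S : CoverSystem) (n : ℕ) : ∀ k : ℕ, S.V (n + k) → S.V n
  | 0 => fun v => v
  | k + 1 => fun v => S.phiIter n k (S.φ (n + k) v)

/-- `φ_{m,n} : V m → V n` for `n ≤ m`. -/
def phiLE (S : CoverSystem) {m n : ℕ} (h : n ≤ m) (v : S.V m) : S.V n :=
  S.phiIter n (m - n) (cast (congrArg S.V (Nat.add_sub_cancel' h).symm) v)

/-- The inverse limit space `X` of the sequence of covers. -/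
def X (S : CoverSystem) : Type :=
  { x : ∀ n, S.V n // ∀ n, S.φ n (x (n + 1)) = x n }

instance (S : CoverSystem) : TopologicalSpace S.X :=
  inferInstanceAs (TopologicalSpace { x : ∀ n, S.V n // ∀ n, S.φ n (x (n + 1)) = x n })

instance (S : CoverSystem) : MeasurableSpace S.X := borel S.X
instance (S : CoverSystem) : BorelSpace S.X := ⟨rfl⟩

/-- The projection `φ_{∞,n} : X → V n`. -/
def proj (S : CoverSystem) (x : S.X) (n : ℕ) : S.V n := Subtype.val x n

/-- `f` is the shift map of the inverse limit: it is compatible with all the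
edge relations (this determines `f` uniquely). -/
def IsLimitMap (S : CoverSystem) (f : S.X → S.X) : Prop :=
  ∀ (x : S.X) (n : ℕ), (S.proj x n, S.proj (f x) n) ∈ (S.G n).E

/-- `U(v) = φ_{∞,n}⁻¹(v)`. -/
def USet (S : CoverSystem) {n : ℕ} (v : S.V n) : Set S.X := {x | S.proj x n = v}

/-- `U(e) = U(u) ∩ f⁻¹(U(v))` for an edge `e = (u,v)`. -/
def UEdge (S : CoverSystem) (f : S.X → S.X) {n : ℕ} (e : S.V n × S.V n) : Set S.X :=
  {x | S.proj x n = e.1 ∧ S.proj (f x) n = e.2}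

/-- `μ` is an `f`-invariant Borel measure. -/
def Invariant (S : CoverSystem) (f : S.X → S.X) (μ : Measure S.X) : Prop :=
  ∀ B : Set S.X, MeasurableSet B → μ (f ⁻¹' B) = μ B

/-- `μ` is ergodic: every invariant Borel set is null or conull. -/
def ErgodicM (S : CoverSystem) (f : S.X → S.X) (μ : Measure S.X) : Prop :=
  ∀ B : Set S.X, MeasurableSet B → f ⁻¹' B = B → μ B = 0 ∨ μ B = 1

/-- The vector `μ_n = Σ_{e ∈ E_n} μ(U(e))·e ∈ Δ_n` of a measure `μ`. -/
noncomputable def muVec (S : CoverSystem) (f : S.X → S.X) (μ : Measure S.X) (n : ℕ) :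
    S.V n × S.V n → ℝ :=
  fun e => (μ (S.UEdge f e)).toReal

/-- `Δ_∞`: compatible sequences of elements of the simplices `Δ_n = 𝒫(G_n)`. -/
def DeltaInf (S : CoverSystem) : Set (∀ n, S.V n × S.V n → ℝ) :=
  {x | (∀ n, MemP (S.G n) (x n)) ∧
    ∀ m n : ℕ, ∀ h : n ≤ m, pushVec (S.phiLE h) (x m) = x n}

/-- `C` is a system of circuits enumerated by `N'`. -/
def IsCircuitSystem (S : CoverSystem) (N' : Set ℕ)
    (C : ∀ n, Set (Set (S.V n × S.V n))) : Prop :=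
  ∀ n ∈ N', C n ⊆ circuitsOf (S.G n)

/-- The system of circuits `C` expresses the measure `μ`. -/
def Expresses (S : CoverSystem) (f : S.X → S.X) (μ : Measure S.X)
    (N' : Set ℕ) (C : ∀ n, Set (Set (S.V n × S.V n))) : Prop :=
  ∀ n ∈ N', ∃ s : Set (S.V n × S.V n) → ℝ,
    (∀ c ∈ C n, 0 ≤ s c) ∧ ∀ e, S.muVec f μ n e = ∑ᶠ c ∈ C n, s c * circTilde c e

/-- The system of circuits `C` expresses every ergodic invariant Borel
probability measure. -/
def ExpressesAllErgodic (S : CoverSystem) (f : S.X → S.X)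
    (N' : Set ℕ) (C : ∀ n, Set (Set (S.V n × S.V n))) : Prop :=
  ∀ μ : Measure S.X, IsProbabilityMeasure μ → S.Invariant f μ → S.ErgodicM f μ →
    S.Expresses f μ N' C

/-- `𝒞̄_∞`: the set of limit sequences of sequences of circuits chosen from `C`. -/
def limitsOf (S : CoverSystem) (N' : Set ℕ)
    (C : ∀ n, Set (Set (S.V n × S.V n))) : Set (∀ m, S.V m × S.V m → ℝ) :=
  {y | ∃ c : ∀ n, Set (S.V n × S.V n), (∀ n ∈ N', c n ∈ C n) ∧
    ∀ m : ℕ, Filter.Tendsto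
      (fun n : ℕ => if h : m ≤ n then dE (pushVec (S.phiLE h) (circTilde (c n))) (y m) else 1)
      (Filter.atTop ⊓ Filter.principal N') (nhds 0)}

end CoverSystem

/-! A point of `𝒫(G)` on an open segment through `c̃` has nonnegative coordinates, so it
vanishes off the circuit `c`. In a circuit every vertex has exactly one incoming and one
outgoing edge, so flow conservation forces a flow supported on `c` to be constant along the
circuit, and total mass `1` pins the constant down to `1 / Per(c)`. Hence both ends of the
segment equal `c̃`. -/

open Finset

theorem Fin.sum_succ_eq_sum_castSucc_of_last_eq {M : Type*} [AddCancelCommMonoid M] {l : ℕ}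
    (f : Fin (l + 1) → M) (hf : f (Fin.last l) = f 0) :
    ∑ i : Fin l, f i.succ = ∑ i : Fin l, f i.castSucc :=
  add_right_cancel (b := f 0) <| by
    rw [add_comm, ← Fin.sum_univ_succ, Fin.sum_univ_castSucc, hf]

theorem eq_zero_of_mem_openSegment {𝕜 ι : Type*} [Field 𝕜] [LinearOrder 𝕜]
    [IsStrictOrderedRing 𝕜] {x y z : ι → 𝕜} (hx : ∀ e, 0 ≤ x e)
    (hy : ∀ e, 0 ≤ y e) (hz : z ∈ openSegment 𝕜 x y) {e : ι} (he : z e = 0) : x e = 0 := by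
  obtain ⟨a, b, ha, hb, -, rfl⟩ := hz
  have hsum : a * x e + b * y e = 0 := he
  have hax := ((add_eq_zero_iff_of_nonneg (mul_nonneg ha.le (hx e))
    (mul_nonneg hb.le (hy e))).mp hsum).1
  exact (mul_eq_zero.mp hax).resolve_left ha.ne'

theorem circTilde_of_mem {V : Type} {c : Set (V × V)} {e : V × V} (he : e ∈ c) :
    circTilde c e = (c.ncard : ℝ)⁻¹ := by
  rw [circTilde, circVec, Set.indicator_of_mem he, mul_one]

theorem circTilde_of_notMem {V : Type} {c : Set (V × V)} {e : V × V} (he : e ∉ c) :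
    circTilde c e = 0 := by
  rw [circTilde, circVec, Set.indicator_of_notMem he, mul_zero]

section ClosedWalk

variable {V : Type} {l : ℕ} {w : Fin (l + 1) → V}

theorem injective_castSucc_of_distinct
    (hdist : ∀ i j : Fin (l + 1), i < j → w i = w j → i = 0 ∧ j = Fin.last l) :
    Function.Injective fun i : Fin l => w i.castSucc :=
  .of_lt_imp_ne fun _ j hij h =>
    Fin.castSucc_ne_last j (hdist _ _ (Fin.castSucc_lt_castSucc_iff.mpr hij) h).2

theorem injective_succ_of_distinct
    (hdist : ∀ i j : Fin (l + 1), i < j → w i = w j → i = 0 ∧ j = Fin.last l) :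
    Function.Injective fun i : Fin l => w i.succ :=
  .of_lt_imp_ne fun i _ hij h =>
    Fin.succ_ne_zero i (hdist _ _ (Fin.succ_lt_succ_iff.mpr hij) h).1

theorem mem_walkEdges (i : Fin l) : (w i.castSucc, w i.succ) ∈ walkEdges w :=
  ⟨i, rfl⟩

theorem walkEdges_eq_range : walkEdges w = Set.range fun i : Fin l => (w i.castSucc, w i.succ) := by
  ext e
  exact exists_congr fun _ => eq_comm

theorem injective_walkEdge (hcs : Function.Injective fun i : Fin l => w i.castSucc) :
    Function.Injective fun i : Fin l => (w i.castSucc, w i.succ) :=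
  fun _ _ h => hcs (congrArg Prod.fst h)

theorem ncard_walkEdges (hcs : Function.Injective fun i : Fin l => w i.castSucc) :
    (walkEdges w).ncard = l := by
  rw [walkEdges_eq_range, Set.ncard_range_of_injective (injective_walkEdge hcs),
    Nat.card_eq_fintype_card, Fintype.card_fin]

variable [Fintype V]

theorem sum_eq_sum_walkEdges (hcs : Function.Injective fun i : Fin l => w i.castSucc)
    (a : V × V → ℝ) (ha : ∀ e ∉ walkEdges w, a e = 0) :
    ∑ e, a e = ∑ i : Fin l, a (w i.castSucc, w i.succ) :=
  (Fintype.sum_of_injective _ (injective_walkEdge hcs) _ _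
    (fun e he => ha e (walkEdges_eq_range (w := w) ▸ he)) fun _ => rfl).symm

variable [DecidableEq V]

theorem sum_in_eq_sum_walkEdges (hcs : Function.Injective fun i : Fin l => w i.castSucc)
    (a : V × V → ℝ) (ha : ∀ e ∉ walkEdges w, a e = 0) (v : V) :
    ∑ u, a (u, v) = ∑ i : Fin l, if w i.succ = v then a (w i.castSucc, w i.succ) else 0 := by
  rw [← sum_eq_sum_walkEdges hcs (fun e => if e.2 = v then a e else 0)
    fun e he => by simp only [ha e he, ite_self], Fintype.sum_prod_type]
  simp only [sum_ite_eq', mem_univ, if_true]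

theorem sum_out_eq_sum_walkEdges (hcs : Function.Injective fun i : Fin l => w i.castSucc)
    (a : V × V → ℝ) (ha : ∀ e ∉ walkEdges w, a e = 0) (v : V) :
    ∑ u, a (v, u) = ∑ i : Fin l, if w i.castSucc = v then a (w i.castSucc, w i.succ) else 0 := by
  rw [← sum_eq_sum_walkEdges hcs (fun e => if e.1 = v then a e else 0)
    fun e he => by simp only [ha e he, ite_self], Fintype.sum_prod_type, sum_comm]
  simp only [sum_ite_eq', mem_univ, if_true]

theorem apply_walkEdge_eq_of_consecutive (hcs : Function.Injective fun i : Fin l => w i.castSucc)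
    (hs : Function.Injective fun i : Fin l => w i.succ) {a : V × V → ℝ}
    (ha : ∀ e ∉ walkEdges w, a e = 0) (hcons : ∀ v, ∑ u, a (u, v) = ∑ u, a (v, u))
    {i j : Fin l} (hij : w i.succ = w j.castSucc) :
    a (w i.castSucc, w i.succ) = a (w j.castSucc, w j.succ) :=
  calc a (w i.castSucc, w i.succ)
      = ∑ k : Fin l, if w k.succ = w i.succ then a (w k.castSucc, w k.succ) else 0 := by
        simp only [hs.eq_iff, sum_ite_eq', mem_univ, if_true]
    _ = ∑ k : Fin l, if w k.castSucc = w i.succ then a (w k.castSucc, w k.succ) else 0 := by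
        rw [← sum_in_eq_sum_walkEdges hcs a ha, hcons, sum_out_eq_sum_walkEdges hcs a ha]
    _ = a (w j.castSucc, w j.succ) := by
        simp only [hij, hcs.eq_iff, sum_ite_eq', mem_univ, if_true]

theorem eq_circTilde_of_support_subset (hl : 0 < l)
    (hcs : Function.Injective fun i : Fin l => w i.castSucc)
    (hs : Function.Injective fun i : Fin l => w i.succ) {G : DirGraph V} {a : V × V → ℝ}
    (hP : MemP G a) (ha : ∀ e ∉ walkEdges w, a e = 0) :
    a = circTilde (walkEdges w) := by
  obtain ⟨n, rfl⟩ : ∃ n, l = n + 1 := ⟨l - 1, by omega⟩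
  have hconst : ∀ i : Fin (n + 1), a (w i.castSucc, w i.succ) = a (w 0, w 1) :=
    Fin.induction rfl fun i hi => hi ▸ (apply_walkEdge_eq_of_consecutive hcs hs ha hP.1.2
      (by rw [Fin.succ_castSucc])).symm
  have hmass : ((n + 1 : ℕ) : ℝ) * a (w 0, w 1) = 1 := by
    rw [← hP.2, sum_eq_sum_walkEdges hcs a ha, sum_congr rfl fun i _ => hconst i, sum_const,
      card_univ, Fintype.card_fin, nsmul_eq_mul]
  funext e
  by_cases he : e ∈ walkEdges w
  · obtain ⟨i, rfl⟩ := he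
    rw [circTilde_of_mem (mem_walkEdges i), ncard_walkEdges hcs, hconst,
      eq_inv_of_mul_eq_one_right hmass]
  · rw [ha e he, circTilde_of_notMem he]

theorem circTilde_memP (hl : 0 < l) (hcs : Function.Injective fun i : Fin l => w i.castSucc)
    {G : DirGraph V} (hwalk : IsWalk G l w) (hclose : w (Fin.last l) = w 0) :
    MemP G (circTilde (walkEdges w)) := by
  have hsupp : ∀ e ∉ walkEdges w, circTilde (walkEdges w) e = 0 := fun _ => circTilde_of_notMem
  have hval : ∀ i : Fin l, circTilde (walkEdges w) (w i.castSucc, w i.succ) = (l : ℝ)⁻¹ :=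
    fun i => by rw [circTilde_of_mem (mem_walkEdges i), ncard_walkEdges hcs]
  refine ⟨⟨⟨fun e => ?_, fun e he => hsupp e ?_⟩, fun v => ?_⟩, ?_⟩
  · exact mul_nonneg (by positivity) (Set.indicator_nonneg (fun _ _ => zero_le_one) e)
  · rintro ⟨i, rfl⟩
    exact he (hwalk i)
  · simp only [sum_in_eq_sum_walkEdges hcs _ hsupp, sum_out_eq_sum_walkEdges hcs _ hsupp, hval]
    exact Fin.sum_succ_eq_sum_castSucc_of_last_eq
      (fun k => if w k = v then (l : ℝ)⁻¹ else 0) (by rw [hclose])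
  · rw [sum_eq_sum_walkEdges hcs _ hsupp, sum_congr rfl fun i _ => hval i, sum_const, card_univ,
      Fintype.card_fin, nsmul_eq_mul, mul_inv_cancel₀ (by positivity)]

end ClosedWalk

/-- For every circuit `c` of `G`, the normalized circuit `c̃`
is an extreme point of the convex set `𝒫(G)`. -/
theorem circTilde_extremePoint {V : Type} [Fintype V] (G : DirGraph V)
    (c : Set (V × V)) (hc : c ∈ circuitsOf G) :
    circTilde c ∈ Set.extremePoints ℝ {a : V × V → ℝ | MemP G a} := by
  classical
  obtain ⟨l, hl, w, hwalk, hclose, hdist, rfl⟩ := hc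
  have hcs := injective_castSucc_of_distinct hdist
  have hs := injective_succ_of_distinct hdist
  refine ⟨circTilde_memP hl hcs hwalk hclose, fun x hx y hy hxy => ?_⟩
  refine eq_circTilde_of_support_subset hl hcs hs hx fun e he => ?_
  exact eq_zero_of_mem_openSegment hx.1.1.1 hy.1.1.1 hxy (circTilde_of_notMem he)
end

section
/- Let s, t be positive integers and 0 < ε ≤ 1/t. Let M = (m_{i,j})_{1≤i≤s, 1≤j≤t} be a real matrix with m_{i,j} ≥ ε for all i, j and Σ_{j=1}^{t} m_{i,j} = 1 for every 1 ≤ i ≤ s. Equip ℝ^s and ℝ^t with the ℓ¹ norm |x| = Σ_i |x_i|. If x = (x_1,…,x_s) ∈ ℝ^s satisfies Σ_{i=1}^{s} x_i = 0, and y ∈ ℝ^t is defined by y_j = Σ_{i=1}^{s} x_i m_{i,j}, then |y| ≤ (1 − tε)|x|. -/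
/-! Because `∑ i, x i = 0`, subtracting `ε` from every entry of `M` does not change
`x M`. The matrix `M - ε` is entrywise nonnegative with row sums `1 - t ε`, and a nonnegative
matrix maps `ℓ¹` to `ℓ¹` with norm at most its largest row sum. -/

open Filter Topology MeasureTheory

section RowStochastic

variable {ι κ R : Type*} [Fintype ι] [Fintype κ] [CommRing R]

lemma sum_mul_sub_const_eq_of_sum_eq_zero {x : ι → R} (hx : ∑ i, x i = 0)
    (a : ι → R) (c : R) : ∑ i, x i * (a i - c) = ∑ i, x i * a i := by
  simp only [mul_sub, Finset.sum_sub_distrib, ← Finset.sum_mul, hx, zero_mul, sub_zero]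

variable [LinearOrder R] [IsStrictOrderedRing R]

lemma sum_abs_sum_mul_le_of_nonneg {N : ι → κ → R} (hN : ∀ i j, 0 ≤ N i j) (x : ι → R) :
    ∑ j, |∑ i, x i * N i j| ≤ ∑ i, |x i| * ∑ j, N i j :=
  calc ∑ j, |∑ i, x i * N i j| ≤ ∑ j, ∑ i, |x i| * N i j := by
        gcongr with j
        refine (Finset.abs_sum_le_sum_abs _ _).trans_eq ?_
        simp_rw [abs_mul, abs_of_nonneg (hN _ j)]
    _ = ∑ i, |x i| * ∑ j, N i j := by
        rw [Finset.sum_comm]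
        simp_rw [Finset.mul_sum]

lemma sum_abs_sum_mul_le_of_sum_eq_zero {M : ι → κ → R} {c : κ → R} (hM : ∀ i j, c j ≤ M i j)
    (hrow : ∀ i, ∑ j, M i j = 1) {x : ι → R} (hx : ∑ i, x i = 0) :
    ∑ j, |∑ i, x i * M i j| ≤ (1 - ∑ j, c j) * ∑ i, |x i| := by
  have hrow' : ∀ i, ∑ j, (M i j - c j) = 1 - ∑ j, c j := fun i => by
    rw [Finset.sum_sub_distrib, hrow]
  calc ∑ j, |∑ i, x i * M i j| = ∑ j, |∑ i, x i * (M i j - c j)| := by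
        simp_rw [sum_mul_sub_const_eq_of_sum_eq_zero hx]
    _ ≤ ∑ i, |x i| * ∑ j, (M i j - c j) :=
        sum_abs_sum_mul_le_of_nonneg (fun i j => sub_nonneg.2 (hM i j)) x
    _ = (1 - ∑ j, c j) * ∑ i, |x i| := by
        simp_rw [hrow', Finset.mul_sum, mul_comm]

end RowStochastic

theorem row_stochastic_contraction_general (s t : ℕ)
    (ε : ℝ)
    (M : Fin s → Fin t → ℝ) (hM : ∀ i j, ε ≤ M i j)
    (hrow : ∀ i, (∑ j, M i j) = 1)
    (x : Fin s → ℝ) (hx : (∑ i, x i) = 0)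
    (y : Fin t → ℝ) (hy : ∀ j, y j = ∑ i, x i * M i j) :
    (∑ j, |y j|) ≤ (1 - (t : ℝ) * ε) * ∑ i, |x i| := by
  have h := sum_abs_sum_mul_le_of_sum_eq_zero (c := fun _ => ε) hM hrow hx
  simpa only [← hy, Finset.sum_const, Finset.card_univ, Fintype.card_fin, nsmul_eq_mul] using h

/-- The contraction lemma for row-stochastic matrices with
entries bounded below by `ε`. -/
theorem row_stochastic_contraction (s t : ℕ) (hs : 0 < s) (ht : 0 < t)
    (ε : ℝ) (hε : 0 < ε) (hεt : ε ≤ 1 / (t : ℝ))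
    (M : Fin s → Fin t → ℝ) (hM : ∀ i j, ε ≤ M i j)
    (hrow : ∀ i, (∑ j, M i j) = 1)
    (x : Fin s → ℝ) (hx : (∑ i, x i) = 0)
    (y : Fin t → ℝ) (hy : ∀ j, y j = ∑ i, x i * M i j) :
    (∑ j, |y j|) ≤ (1 - (t : ℝ) * ε) * ∑ i, |x i| :=
  row_stochastic_contraction_general s t ε M hM hrow x hx y hy
end
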